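/- arXiv:2202.12644 — 2 statements merged into one kernel-verified Lean document; each statement's English description precedes it below -/
import Mathlib

section
/- Let B be a d×d strictly lower triangular random matrix and V a diagonal random matrix with diagonal entries ν_1,…,ν_d, with B and V independent and all second moments finite. Then E[(I_d - B)^T V (I_d - B)] = (I_d - E[B])^T E[V] (I_d - E[B]) + C, where C is the symmetric d×d matrix with entries C_{i,j} = Σ_{k=max(i,j)+1}^{d} Cov(β_{k,i}, β_{k,j}) E[ν_k], and β_{k,i} denotes the (k,i) entry of B. -/
open MeasureTheory Matrix ProbabilityTheory

/-! Entrywise, `((I - B)ᵀ V (I - B)) i j = ∑ k, (δ_{ki} - β_{ki}) (δ_{kj} - β_{kj}) ν_k`. Since `B`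
and `V` are independent, each summand has expectation `E[(δ_{ki} - β_{ki}) (δ_{kj} - β_{kj})] E[ν_k]`,
and the first factor is `(δ_{ki} - E β_{ki}) (δ_{kj} - E β_{kj}) + Cov(β_{ki}, β_{kj})`. Strict lower
triangularity makes the covariance vanish unless `k > max i j`. -/

theorem Matrix.transpose_mul_diagonal_mul_apply {n R : Type*} [Fintype n] [DecidableEq n]
    [CommSemiring R] (A : Matrix n n R) (v : n → R) (i j : n) :
    (Aᵀ * diagonal v * A) i j = ∑ k, A k i * A k j * v k := by
  simp only [mul_apply, transpose_apply, diagonal_apply, mul_ite, mul_zero,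
    Finset.sum_ite_eq', Finset.mem_univ, if_true]
  exact Finset.sum_congr rfl fun k _ => by ring

section

variable {α : Type*} [MeasurableSpace α] {P : Measure α}

theorem ProbabilityTheory.IndepFun.integral_transpose_mul_diagonal_mul_apply
    {n : Type*} [Fintype n] [DecidableEq n] {A : α → n → n → ℝ} {ν : α → n → ℝ}
    (hindep : IndepFun A ν P) {i j : n}
    (hA : ∀ k, Integrable (fun ω => A ω k i * A ω k j) P)
    (hν : ∀ k, Integrable (fun ω => ν ω k) P) :
    ∫ ω, ((of (A ω))ᵀ * diagonal (ν ω) * of (A ω)) i j ∂P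
      = ∑ k, (∫ ω, A ω k i * A ω k j ∂P) * ∫ ω, ν ω k ∂P := by
  have hindep_entry : ∀ k, IndepFun (fun ω => A ω k i * A ω k j) (fun ω => ν ω k) P := fun k =>
    (hindep.comp (φ := fun M => M k i * M k j) (by fun_prop) (measurable_pi_apply k) :)
  simp only [transpose_mul_diagonal_mul_apply, of_apply]
  rw [integral_finsetSum (f := fun k ω => A ω k i * A ω k j * ν ω k) _
    fun k _ => (hindep_entry k).integrable_mul (hA k) (hν k)]
  exact Finset.sum_congr rfl fun k _ =>
    (hindep_entry k).integral_mul_eq_mul_integral (hA k).1 (hν k).1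

theorem MeasureTheory.Integrable.const_sub_mul_const_sub [IsFiniteMeasure P] {X Y : α → ℝ}
    (hX : Integrable X P) (hY : Integrable Y P) (hXY : Integrable (fun ω => X ω * Y ω) P)
    (a b : ℝ) :
    Integrable (fun ω => (a - X ω) * (b - Y ω)) P := by
  have hexpand : (fun ω => (a - X ω) * (b - Y ω))
      = fun ω => a * b - (b * X ω + a * Y ω) + X ω * Y ω := by
    funext ω; ring
  rw [hexpand]
  exact ((integrable_const _).sub ((hX.const_mul b).add (hY.const_mul a))).add hXY

theorem integral_const_sub_mul_const_sub [IsProbabilityMeasure P] {X Y : α → ℝ}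
    (hX : Integrable X P) (hY : Integrable Y P) (hXY : Integrable (fun ω => X ω * Y ω) P)
    (a b : ℝ) :
    ∫ ω, (a - X ω) * (b - Y ω) ∂P
      = (a - ∫ ω, X ω ∂P) * (b - ∫ ω, Y ω ∂P)
        + ((∫ ω, X ω * Y ω ∂P) - (∫ ω, X ω ∂P) * ∫ ω, Y ω ∂P) := by
  have hexpand : (fun ω => (a - X ω) * (b - Y ω))
      = fun ω => a * b - (b * X ω + a * Y ω) + X ω * Y ω := by
    funext ω; ring
  rw [hexpand, integral_add _ hXY, integral_sub (integrable_const _),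
    integral_add (hX.const_mul b) (hY.const_mul a), integral_const, probReal_univ, one_smul,
    integral_const_mul, integral_const_mul]
  · ring
  · exact (hX.const_mul b).add (hY.const_mul a)
  · exact (integrable_const _).sub ((hX.const_mul b).add (hY.const_mul a))

end

theorem expectation_IminusB_V_IminusB_general
    {α : Type*} [MeasurableSpace α] (P : Measure α) [IsProbabilityMeasure P]
    (d : ℕ) (B : α → Fin d → Fin d → ℝ) (ν : α → Fin d → ℝ)
    (hstrict : ∀ ω (k i : Fin d), k ≤ i → B ω k i = 0)
    (hindep : IndepFun B ν P)
    (hintB : ∀ i j, Integrable (fun ω => B ω i j) P)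
    (hintν : ∀ k, Integrable (fun ω => ν ω k) P)
    (hintBB : ∀ i j k, Integrable (fun ω => B ω k i * B ω k j) P)
    (EB : Matrix (Fin d) (Fin d) ℝ) (hEB : ∀ i j, EB i j = ∫ ω, B ω i j ∂P)
    (Eν : Fin d → ℝ) (hEν : ∀ k, Eν k = ∫ ω, ν ω k ∂P)
    (C : Matrix (Fin d) (Fin d) ℝ)
    (hC : ∀ i j, C i j =
        ∑ k ∈ Finset.filter (fun k => max i j < k) Finset.univ,
          ((∫ ω, B ω k i * B ω k j ∂P) - EB k i * EB k j) * Eν k) :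
    ∀ i j : Fin d, ∫ ω, ((1 - Matrix.of (B ω))ᵀ * Matrix.diagonal (ν ω)
        * (1 - Matrix.of (B ω)) : Matrix (Fin d) (Fin d) ℝ) i j ∂P
      = ((1 - EB)ᵀ * Matrix.diagonal Eν * (1 - EB) : Matrix (Fin d) (Fin d) ℝ) i j
        + C i j := by
  intro i j
  set A : α → Fin d → Fin d → ℝ := fun ω k l => (1 : Matrix (Fin d) (Fin d) ℝ) k l - B ω k l
  have hA : ∀ ω, 1 - of (B ω) = of (A ω) := fun _ => rfl
  have hindepA : IndepFun A ν P :=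
    (hindep.comp (φ := fun M k l => (1 : Matrix (Fin d) (Fin d) ℝ) k l - M k l) (by fun_prop)
      measurable_id :)
  have hintA : ∀ k, Integrable (fun ω => A ω k i * A ω k j) P := fun k =>
    (hintB k i).const_sub_mul_const_sub (hintB k j) (hintBB i j k) _ _
  have hcov_eq_zero : ∀ k, k ≤ max i j →
      (∫ ω, B ω k i * B ω k j ∂P) - EB k i * EB k j = 0 := by
    intro k hk
    rcases le_max_iff.mp hk with h | h <;> simp [hEB, hstrict _ _ _ h]
  simp only [hA]
  rw [hindepA.integral_transpose_mul_diagonal_mul_apply hintA hintν,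
    transpose_mul_diagonal_mul_apply, hC, Finset.sum_filter, ← Finset.sum_add_distrib]
  refine Finset.sum_congr rfl fun k _ => ?_
  rw [integral_const_sub_mul_const_sub (hintB k i) (hintB k j) (hintBB i j k), ← hEB, ← hEB,
    ← hEν, Matrix.sub_apply, Matrix.sub_apply]
  split_ifs with hk
  · ring
  · rw [hcov_eq_zero k (not_lt.mp hk)]
    ring

/-- For a strictly lower triangular random matrix `B` independent of the
diagonal random matrix `V = diag(ν)`, `E[(I-B)ᵀ V (I-B)] = (I-E B)ᵀ (E V) (I-E B) + C`,
where `C i j = ∑_{k > max i j} Cov(β_{k,i}, β_{k,j}) E[ν_k]`. -/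
theorem expectation_IminusB_V_IminusB
    {α : Type*} [MeasurableSpace α] (P : Measure α) [IsProbabilityMeasure P]
    (d : ℕ) (B : α → Fin d → Fin d → ℝ) (ν : α → Fin d → ℝ)
    (hstrict : ∀ ω (k i : Fin d), k ≤ i → B ω k i = 0)
    (hindep : IndepFun B ν P)
    (hintB : ∀ i j, Integrable (fun ω => B ω i j) P)
    (hintν : ∀ k, Integrable (fun ω => ν ω k) P)
    (hintBB : ∀ i j k, Integrable (fun ω => B ω k i * B ω k j) P)
    (hintBBν : ∀ i j k, Integrable (fun ω => B ω k i * B ω k j * ν ω k) P)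
    (EB : Matrix (Fin d) (Fin d) ℝ) (hEB : ∀ i j, EB i j = ∫ ω, B ω i j ∂P)
    (Eν : Fin d → ℝ) (hEν : ∀ k, Eν k = ∫ ω, ν ω k ∂P)
    (C : Matrix (Fin d) (Fin d) ℝ)
    (hC : ∀ i j, C i j =
        ∑ k ∈ Finset.filter (fun k => max i j < k) Finset.univ,
          ((∫ ω, B ω k i * B ω k j ∂P) - EB k i * EB k j) * Eν k) :
    ∀ i j : Fin d, ∫ ω, ((1 - Matrix.of (B ω))ᵀ * Matrix.diagonal (ν ω)
        * (1 - Matrix.of (B ω)) : Matrix (Fin d) (Fin d) ℝ) i j ∂P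
      = ((1 - EB)ᵀ * Matrix.diagonal Eν * (1 - EB) : Matrix (Fin d) (Fin d) ℝ) i j
        + C i j :=
  expectation_IminusB_V_IminusB_general P d B ν hstrict hindep hintB hintν hintBB EB hEB Eν hEν C hC
end

section
/- The standard half-Cauchy distribution admits the following inverse-gamma scale mixture representation: if λ ~ InvGamma(1/2, 1) and υ² | λ ~ InvGamma(1/2, 1/λ), then the marginal density of υ = √(υ²) on (0,∞) is 2/(π(1+υ²)), i.e., υ ~ C⁺(0,1). -/
/-!
As a function of `λ`, the mixture integrand `InvGamma(a, 1/λ)(x) · InvGamma(a', b)(λ)` is a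
multiple of `λ^(-(a+a')-1) e^(-(b + 1/x)/λ)`, an unnormalised inverse-gamma density, whose
integral is `Γ(a+a') / (b + 1/x)^(a+a')` (the Gamma integral after `t ↦ 1/t`). For
`a = a' = 1/2`, `b = 1`, `x = u²` this makes the density of `υ²` equal to `1 / (π u (1 + u²))`,
and the Jacobian `2u` of `x = u²` turns it into the half-Cauchy density.
-/

open MeasureTheory

/-- The inverse-gamma density with shape `a` and scale `b`. -/
noncomputable def invGammaDensity (a b x : ℝ) : ℝ :=
  b ^ a / Real.Gamma a * x ^ (-a - 1) * Real.exp (-b / x)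

open Real Set

theorem integral_rpow_neg_mul_exp_neg_div_Ioi {s c : ℝ} (hs : 0 < s) (hc : 0 < c) :
    ∫ x in Ioi 0, x ^ (-s - 1) * exp (-c / x) = (1 / c) ^ s * Gamma s := by
  rw [← integral_rpow_mul_exp_neg_mul_Ioi hs hc,
    ← integral_comp_rpow_Ioi (fun t => t ^ (s - 1) * exp (-(c * t))) (p := -1) (by norm_num)]
  refine setIntegral_congr_fun measurableSet_Ioi fun x (hx : 0 < x) => ?_
  rw [smul_eq_mul, abs_neg, abs_one, one_mul, ← rpow_mul hx.le, ← mul_assoc,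
    ← rpow_add hx, rpow_neg_one, div_eq_mul_inv]
  ring_nf

theorem invGammaDensity_one_div_mul_invGammaDensity (a a' b x : ℝ) {t : ℝ} (ht : 0 < t) :
    invGammaDensity a (1 / t) x * invGammaDensity a' b t =
      x ^ (-a - 1) * b ^ a' / (Gamma a * Gamma a') *
        (t ^ (-(a + a') - 1) * exp (-(b + x⁻¹) / t)) := by
  have hpow : (1 / t) ^ a * t ^ (-a' - 1) = t ^ (-(a + a') - 1) := by
    rw [one_div, inv_rpow ht.le, ← rpow_neg ht.le, ← rpow_add ht]
    ring_nf
  have hexp : exp (-(1 / t) / x) * exp (-b / t) = exp (-(b + x⁻¹) / t) := by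
    rw [← exp_add]
    ring_nf
  unfold invGammaDensity
  rw [← hpow, ← hexp]
  ring

theorem integral_invGammaDensity_one_div_mul_invGammaDensity {a a' b x : ℝ} (ha : 0 < a + a')
    (hb : 0 ≤ b) (hx : 0 < x) :
    ∫ t in Ioi 0, invGammaDensity a (1 / t) x * invGammaDensity a' b t =
      x ^ (-a - 1) * b ^ a' * Gamma (a + a') / (Gamma a * Gamma a' * (b + x⁻¹) ^ (a + a')) := by
  have hc : 0 < b + x⁻¹ := by positivity
  rw [setIntegral_congr_fun measurableSet_Ioi fun t (ht : 0 < t) =>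
      invGammaDensity_one_div_mul_invGammaDensity a a' b x ht,
    integral_const_mul, integral_rpow_neg_mul_exp_neg_div_Ioi ha hc, div_rpow zero_le_one hc.le,
    one_rpow]
  field_simp

/-- The half-Cauchy distribution as an inverse-gamma scale mixture:
if `λ ~ InvGamma(1/2, 1)` and `υ² | λ ~ InvGamma(1/2, 1/λ)`, the marginal density of
`υ = √(υ²)` on `(0,∞)` is `2/(π(1+υ²))`, the standard half-Cauchy density. -/
theorem halfCauchy_invGamma_mixture (u : ℝ) (hu : 0 < u) :
    2 * u * ∫ lam in Set.Ioi (0 : ℝ),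
        invGammaDensity (1 / 2) (1 / lam) (u ^ 2) * invGammaDensity (1 / 2) 1 lam
      = 2 / (Real.pi * (1 + u ^ 2)) := by
  have hu3 : (u ^ 2) ^ (-(1 / 2 : ℝ) - 1) = (u ^ 3)⁻¹ := by
    rw [← rpow_natCast, ← rpow_mul hu.le, ← rpow_natCast, ← rpow_neg hu.le]
    norm_num
  rw [integral_invGammaDensity_one_div_mul_invGammaDensity (by norm_num) zero_le_one
      (by positivity),
    show (1 / 2 + 1 / 2 : ℝ) = 1 by norm_num, Gamma_one, rpow_one, one_rpow, hu3,
    Gamma_one_half_eq, mul_self_sqrt pi_pos.le]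
  field_simp
  ring
end
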